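/- arXiv:2505.19664 — 4 statements merged into one kernel-verified Lean document; each statement's English description precedes it below -/
import Mathlib

section
/- Let G, G' : [0,1]×[0,1] → [0,∞) be measurable and bounded with ∫₀¹ G(u,v) dv ≥ c and ∫₀¹ G'(u,v) dv ≥ c for every u ∈ [0,1], where c > 0. Then for all u₁, u₂ ∈ [0,1], the normalized kernels satisfy ∫₀¹ |G̃(u₁,v) − G̃'(u₂,v)| dv ≤ (2/c) ∫₀¹ |G(u₁,v) − G'(u₂,v)| dv. -/
open MeasureTheory ENNReal

noncomputable section

/-- The normalized kernel `G̃(u,v) = G(u,v) / ∫₀¹ G(u,w) dw`. -/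
def gnorm (G : ℝ → ℝ → ℝ) (u v : ℝ) : ℝ :=
  G u v / ∫ w in Set.Icc (0:ℝ) 1, G u w

/-
Write `f = G(u₁,·)`, `g = G'(u₂,·)` with masses `a, b ≥ c`. Then
`f/a - g/b = (f - g)/a + g (b - a)/(a b)`; integrating the absolute value, and using `g ≥ 0` so
that `∫ |g| = b`, gives `∫ |f/a - g/b| ≤ ∫ |f - g| / a + |a - b| / a`, and `|a - b| ≤ ∫ |f - g|`.
Integrability of `f` and `g` needs no boundedness: a non-integrable function has Bochner
integral `0`, which the positive lower bound `c` on the masses rules out.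
-/

theorem abs_div_sub_div_le {x y a b : ℝ} (ha : 0 < a) (hb : 0 < b) (hy : 0 ≤ y) :
    |x / a - y / b| ≤ |x - y| / a + y * (|a - b| / (a * b)) := by
  have hsplit : x / a - y / b = (x - y) / a + y * ((b - a) / (a * b)) := by
    field_simp
    ring
  calc |x / a - y / b| ≤ |(x - y) / a| + |y * ((b - a) / (a * b))| :=
        hsplit ▸ abs_add_le _ _
    _ = |x - y| / a + y * (|a - b| / (a * b)) := by
        rw [abs_div, abs_of_pos ha, abs_mul, abs_of_nonneg hy, abs_div,
          abs_of_pos (mul_pos ha hb), abs_sub_comm b a]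

theorem integral_abs_div_integral_sub_div_integral_le {α : Type*} [MeasurableSpace α]
    {μ : Measure α} {f g : α → ℝ} (hg : 0 ≤ᵐ[μ] g)
    (ha : 0 < ∫ x, f x ∂μ) (hb : 0 < ∫ x, g x ∂μ) :
    ∫ x, |f x / ∫ y, f y ∂μ - g x / ∫ y, g y ∂μ| ∂μ ≤
      2 / (∫ x, f x ∂μ) * ∫ x, |f x - g x| ∂μ := by
  set a := ∫ x, f x ∂μ
  set b := ∫ x, g x ∂μ
  set I := ∫ x, |f x - g x| ∂μ
  have hf_int : Integrable f μ := .of_integral_ne_zero ha.ne'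
  have hg_int : Integrable g μ := .of_integral_ne_zero hb.ne'
  have hfg_int : Integrable (fun x => |f x - g x|) μ := (hf_int.sub hg_int).abs
  have hmass : |a - b| ≤ I := by
    simpa only [integral_sub hf_int hg_int, Real.norm_eq_abs] using
      norm_integral_le_integral_norm (μ := μ) (fun x => f x - g x)
  calc ∫ x, |f x / a - g x / b| ∂μ
      ≤ ∫ x, (|f x - g x| / a + g x * (|a - b| / (a * b))) ∂μ := by
        refine integral_mono_ae ((hf_int.div_const a).sub (hg_int.div_const b)).abs
          ((hfg_int.div_const a).add (hg_int.mul_const _)) ?_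
        filter_upwards [hg] with x hx
        exact abs_div_sub_div_le ha hb hx
    _ = I / a + |a - b| / a := by
        rw [integral_add (hfg_int.div_const a) (hg_int.mul_const _), integral_div,
          integral_mul_const]
        field_simp
        ring
    _ ≤ 2 / a * I := by
        rw [div_mul_eq_mul_div, two_mul, add_div]
        gcongr

theorem normalized_kernel_L1_stability_general
    (G G' : ℝ → ℝ → ℝ) (c : ℝ) (hc : 0 < c)
    (hG'nonneg : ∀ u v, 0 ≤ G' u v)
    (hGdeg : ∀ u ∈ Set.Icc (0:ℝ) 1, c ≤ ∫ v in Set.Icc (0:ℝ) 1, G u v)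
    (hG'deg : ∀ u ∈ Set.Icc (0:ℝ) 1, c ≤ ∫ v in Set.Icc (0:ℝ) 1, G' u v)
    (u₁ u₂ : ℝ) (hu₁ : u₁ ∈ Set.Icc (0:ℝ) 1) (hu₂ : u₂ ∈ Set.Icc (0:ℝ) 1) :
    ∫ v in Set.Icc (0:ℝ) 1, |gnorm G u₁ v - gnorm G' u₂ v| ≤
      (2 / c) * ∫ v in Set.Icc (0:ℝ) 1, |G u₁ v - G' u₂ v| := by
  have ha := hGdeg u₁ hu₁
  have hb := hG'deg u₂ hu₂
  calc ∫ v in Set.Icc (0:ℝ) 1, |gnorm G u₁ v - gnorm G' u₂ v|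
      ≤ 2 / (∫ v in Set.Icc (0:ℝ) 1, G u₁ v) * ∫ v in Set.Icc (0:ℝ) 1, |G u₁ v - G' u₂ v| :=
        integral_abs_div_integral_sub_div_integral_le
          (.of_forall fun v => hG'nonneg u₂ v) (hc.trans_le ha) (hc.trans_le hb)
    _ ≤ (2 / c) * ∫ v in Set.Icc (0:ℝ) 1, |G u₁ v - G' u₂ v| := by
        gcongr

/-- **L¹ stability of graphon normalization**: if both kernels have degrees bounded below
by `c > 0`, then `∫₀¹ |G̃(u₁,v) − G̃'(u₂,v)| dv ≤ (2/c) ∫₀¹ |G(u₁,v) − G'(u₂,v)| dv`. -/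
theorem normalized_kernel_L1_stability
    (G G' : ℝ → ℝ → ℝ) (M c : ℝ) (hc : 0 < c)
    (hGmeas : Measurable (Function.uncurry G))
    (hG'meas : Measurable (Function.uncurry G'))
    (hGnonneg : ∀ u v, 0 ≤ G u v)
    (hG'nonneg : ∀ u v, 0 ≤ G' u v)
    (hGbdd : ∀ u v, G u v ≤ M)
    (hG'bdd : ∀ u v, G' u v ≤ M)
    (hGdeg : ∀ u ∈ Set.Icc (0:ℝ) 1, c ≤ ∫ v in Set.Icc (0:ℝ) 1, G u v)
    (hG'deg : ∀ u ∈ Set.Icc (0:ℝ) 1, c ≤ ∫ v in Set.Icc (0:ℝ) 1, G' u v)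
    (u₁ u₂ : ℝ) (hu₁ : u₁ ∈ Set.Icc (0:ℝ) 1) (hu₂ : u₂ ∈ Set.Icc (0:ℝ) 1) :
    ∫ v in Set.Icc (0:ℝ) 1, |gnorm G u₁ v - gnorm G' u₂ v| ≤
      (2 / c) * ∫ v in Set.Icc (0:ℝ) 1, |G u₁ v - G' u₂ v| :=
  normalized_kernel_L1_stability_general G G' c hc hG'nonneg hGdeg hG'deg u₁ u₂ hu₁ hu₂

end
end

section
/- Let w₁, w₂ : [0,1] → [0,∞) be Lebesgue-measurable with ∫₀¹ w₁(v) dv = ∫₀¹ w₂(v) dv = 1, and let (μ^v)_{v∈[0,1]} be a setwise measurable family of Borel probability measures on ℝ^d with ∫ |x|² dμ^v(x) ≤ K for every v ∈ [0,1]. Let P and Q be the mixture probability measures determined by P(B) = ∫₀¹ w₁(v) μ^v(B) dv and Q(B) = ∫₀¹ w₂(v) μ^v(B) dv for Borel sets B. Then W₂²(P, Q) ≤ 2K ∫₀¹ |w₁(v) − w₂(v)| dv. -/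
/-!
Both mixtures contain the common part `ν`, the mixture with weights `min a b`; the remainders
`α` and `β`, with weights `a - b` and `b - a` (truncated in `ℝ≥0∞`), then have the same mass `ε`.
Keeping `ν` on the diagonal and coupling `α` with `β` by `ε⁻¹ • α.prod β` costs at most
`2 ∫ ‖x‖² dα + 2 ∫ ‖x‖² dβ`, because `‖x - y‖² ≤ 2 ‖x‖² + 2 ‖y‖²`, and this is at most
`2 K ∫ ((a - b) + (b - a)) dρ` by the moment bound.
-/

open MeasureTheory ENNReal

noncomputable section

/-- The squared 2-Wasserstein distance, as the infimum over couplings of the integral of the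
squared distance (valued in `ℝ≥0∞`). -/
def W2sq {E : Type*} [NormedAddCommGroup E] [MeasurableSpace E]
    (μ ν : Measure E) : ℝ≥0∞ :=
  ⨅ (π : Measure (E × E)) (_ : IsProbabilityMeasure π)
    (_ : π.map Prod.fst = μ) (_ : π.map Prod.snd = ν),
    ∫⁻ p, (‖p.1 - p.2‖₊ : ℝ≥0∞) ^ 2 ∂π

open Set

theorem W2sq_le_lintegral {E : Type*} [NormedAddCommGroup E] [MeasurableSpace E]
    {μ ν : Measure E} (π : Measure (E × E)) [IsProbabilityMeasure π]
    (hfst : π.map Prod.fst = μ) (hsnd : π.map Prod.snd = ν) :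
    W2sq μ ν ≤ ∫⁻ p, (‖p.1 - p.2‖₊ : ℝ≥0∞) ^ 2 ∂π :=
  iInf₂_le_of_le π ‹_› <| iInf₂_le_of_le hfst hsnd le_rfl

theorem ennreal_nnnorm_sub_sq_le {E : Type*} [NormedAddCommGroup E] (x y : E) :
    (‖x - y‖₊ : ℝ≥0∞) ^ 2 ≤ 2 * (‖x‖₊ : ℝ≥0∞) ^ 2 + 2 * (‖y‖₊ : ℝ≥0∞) ^ 2 := by
  have h : ‖x - y‖₊ ^ 2 ≤ 2 * ‖x‖₊ ^ 2 + 2 * ‖y‖₊ ^ 2 :=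
    calc ‖x - y‖₊ ^ 2 ≤ (‖x‖₊ + ‖y‖₊) ^ 2 := pow_le_pow_left₀ bot_le (nnnorm_sub_le x y) 2
      _ ≤ 2 * ‖x‖₊ ^ 2 + 2 * ‖y‖₊ ^ 2 := mul_add (2 : NNReal) _ _ ▸ add_sq_le
  exact_mod_cast h

section Mixture

variable {ι E : Type*} [MeasurableSpace ι] [MeasurableSpace E]

def SetwiseAEMeasurable (μ : ι → Measure E) (ρ : Measure ι) : Prop :=
  ∀ s, MeasurableSet s → AEMeasurable (fun v => μ v s) ρ

/-- `σ = ∫ μ v dρ(v)`. The family need not be a measurable map into `Measure E`, so this is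
stated on measurable sets rather than through `Measure.bind`. -/
def IsMixture (σ : Measure E) (ρ : Measure ι) (μ : ι → Measure E) : Prop :=
  ∀ s, MeasurableSet s → σ s = ∫⁻ v, μ v s ∂ρ

variable {ρ : Measure ι} {μ μ' : ι → Measure E} {σ σ' : Measure E}

theorem SetwiseAEMeasurable.smul (hμ : SetwiseAEMeasurable μ ρ) {c : ι → ℝ≥0∞}
    (hc : AEMeasurable c ρ) : SetwiseAEMeasurable (fun v => c v • μ v) ρ :=
  fun s hs => by simpa only [Measure.smul_apply, smul_eq_mul] using hc.fun_mul (hμ s hs)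

theorem SetwiseAEMeasurable.exists_isMixture (hμ : SetwiseAEMeasurable μ ρ) :
    ∃ σ : Measure E, IsMixture σ ρ μ :=
  ⟨Measure.ofMeasurable (fun s _ => ∫⁻ v, μ v s ∂ρ) (by simp) fun f hf hdisj => by
      simp_rw [measure_iUnion hdisj hf]
      exact lintegral_tsum fun i => hμ _ (hf i),
    fun _ hs => Measure.ofMeasurable_apply _ hs⟩

theorem IsMixture.unique (h : IsMixture σ ρ μ) (h' : IsMixture σ' ρ μ) : σ = σ' :=
  Measure.ext fun s hs => (h s hs).trans (h' s hs).symm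

theorem IsMixture.congr_ae (h : IsMixture σ ρ μ) (hμμ' : ∀ᵐ v ∂ρ, μ v = μ' v) :
    IsMixture σ ρ μ' :=
  fun s hs => (h s hs).trans <| lintegral_congr_ae <| hμμ'.mono fun _ hv => congrArg (· s) hv

theorem IsMixture.add (h : IsMixture σ ρ μ) (h' : IsMixture σ' ρ μ')
    (hμ : SetwiseAEMeasurable μ ρ) : IsMixture (σ + σ') ρ (μ + μ') :=
  fun s hs => by
    simp only [Measure.add_apply, Pi.add_apply, h s hs, h' s hs]
    exact (lintegral_add_left' (hμ s hs) _).symm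

theorem SetwiseAEMeasurable.aemeasurable_simpleFunc_lintegral (hμ : SetwiseAEMeasurable μ ρ)
    (g : SimpleFunc E ℝ≥0∞) : AEMeasurable (fun v => g.lintegral (μ v)) ρ :=
  Finset.aemeasurable_fun_sum _ fun y _ => (hμ _ (g.measurableSet_fiber y)).const_mul y

theorem IsMixture.simpleFunc_lintegral (h : IsMixture σ ρ μ) (hμ : SetwiseAEMeasurable μ ρ)
    (g : SimpleFunc E ℝ≥0∞) : g.lintegral σ = ∫⁻ v, g.lintegral (μ v) ∂ρ := by
  have hfib (y : ℝ≥0∞) : AEMeasurable (fun v => μ v (g ⁻¹' {y})) ρ :=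
    hμ _ (g.measurableSet_fiber y)
  simp only [SimpleFunc.lintegral, h _ (g.measurableSet_fiber _),
    ← lintegral_const_mul'' _ (hfib _)]
  exact (lintegral_finsetSum' _ fun y _ => (hfib y).const_mul y).symm

theorem IsMixture.lintegral_eq (h : IsMixture σ ρ μ) (hμ : SetwiseAEMeasurable μ ρ)
    {f : E → ℝ≥0∞} (hf : Measurable f) : ∫⁻ x, f x ∂σ = ∫⁻ v, ∫⁻ x, f x ∂μ v ∂ρ := by
  simp only [lintegral_eq_iSup_eapprox_lintegral hf, h.simpleFunc_lintegral hμ]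
  refine (lintegral_iSup' (fun n => hμ.aemeasurable_simpleFunc_lintegral _) ?_).symm
  exact ae_of_all _ fun v n k hnk =>
    SimpleFunc.lintegral_mono (SimpleFunc.monotone_eapprox f hnk) le_rfl

theorem IsMixture.lintegral_le {c : ι → ℝ≥0∞}
    (h : IsMixture σ ρ fun v => c v • μ v) (hμ : SetwiseAEMeasurable μ ρ)
    (hc : AEMeasurable c ρ) {f : E → ℝ≥0∞} (hf : Measurable f) {K : ℝ≥0∞}
    (hK : ∀ᵐ v ∂ρ, ∫⁻ x, f x ∂μ v ≤ K) : ∫⁻ x, f x ∂σ ≤ (∫⁻ v, c v ∂ρ) * K := by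
  rw [h.lintegral_eq (hμ.smul hc) hf, ← lintegral_mul_const'' _ hc]
  refine lintegral_mono_ae (hK.mono fun v hv => ?_)
  rw [lintegral_smul_measure, smul_eq_mul]
  gcongr

end Mixture

section Coupling

variable {E : Type*} [MeasurableSpace E]

/-- A coupling of `α` and `β` as soon as they have the same finite mass. -/
def rescaledProd (α β : Measure E) : Measure (E × E) := (β univ)⁻¹ • α.prod β

variable {α β : Measure E} [IsFiniteMeasure β]

theorem map_fst_rescaledProd (h : α univ = β univ) : (rescaledProd α β).map Prod.fst = α := by
  rcases eq_or_ne (β univ) 0 with h0 | h0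
  · rw [Measure.measure_univ_eq_zero.mp (h.trans h0), rescaledProd, Measure.zero_prod,
      smul_zero, Measure.map_zero]
  · rw [rescaledProd, Measure.map_smul, Measure.map_fst_prod, smul_smul,
      ENNReal.inv_mul_cancel h0 (measure_ne_top β univ), one_smul]

theorem map_snd_rescaledProd (h : α univ = β univ) : (rescaledProd α β).map Prod.snd = β := by
  rcases eq_or_ne (β univ) 0 with h0 | h0
  · rw [Measure.measure_univ_eq_zero.mp h0, rescaledProd, Measure.prod_zero,
      smul_zero, Measure.map_zero]
  · rw [rescaledProd, Measure.map_smul, Measure.map_snd_prod, smul_smul, h,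
      ENNReal.inv_mul_cancel h0 (measure_ne_top β univ), one_smul]

variable [NormedAddCommGroup E] [OpensMeasurableSpace E]

theorem lintegral_rescaledProd_le (h : α univ = β univ) :
    ∫⁻ p, (‖p.1 - p.2‖₊ : ℝ≥0∞) ^ 2 ∂rescaledProd α β ≤
      2 * ∫⁻ x, (‖x‖₊ : ℝ≥0∞) ^ 2 ∂α + 2 * ∫⁻ x, (‖x‖₊ : ℝ≥0∞) ^ 2 ∂β := by
  have hsq : Measurable fun x : E => (‖x‖₊ : ℝ≥0∞) ^ 2 := by fun_prop
  have hfst : ∫⁻ p, (‖p.1‖₊ : ℝ≥0∞) ^ 2 ∂α.prod β = β univ * ∫⁻ x, (‖x‖₊ : ℝ≥0∞) ^ 2 ∂α := by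
    rw [← lintegral_map hsq measurable_fst, Measure.map_fst_prod, lintegral_smul_measure,
      smul_eq_mul]
  have hsnd : ∫⁻ p, (‖p.2‖₊ : ℝ≥0∞) ^ 2 ∂α.prod β = β univ * ∫⁻ x, (‖x‖₊ : ℝ≥0∞) ^ 2 ∂β := by
    rw [← lintegral_map hsq measurable_snd, Measure.map_snd_prod, lintegral_smul_measure,
      smul_eq_mul, h]
  calc ∫⁻ p, (‖p.1 - p.2‖₊ : ℝ≥0∞) ^ 2 ∂rescaledProd α β
      ≤ (β univ)⁻¹ * ∫⁻ p, 2 * (‖p.1‖₊ : ℝ≥0∞) ^ 2 + 2 * (‖p.2‖₊ : ℝ≥0∞) ^ 2 ∂α.prod β := by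
        rw [rescaledProd, lintegral_smul_measure, smul_eq_mul]
        gcongr with p
        exact ennreal_nnnorm_sub_sq_le p.1 p.2
    _ = ((β univ)⁻¹ * β univ) *
          (2 * ∫⁻ x, (‖x‖₊ : ℝ≥0∞) ^ 2 ∂α + 2 * ∫⁻ x, (‖x‖₊ : ℝ≥0∞) ^ 2 ∂β) := by
        rw [lintegral_add_left (by fun_prop), lintegral_const_mul _ (by fun_prop),
          lintegral_const_mul _ (by fun_prop), hfst, hsnd]
        ring
    _ ≤ _ := mul_le_of_le_one_left bot_le (ENNReal.inv_mul_le_one _)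

theorem W2sq_add_le (ν : Measure E) [IsProbabilityMeasure (ν + α)] (h : α univ = β univ) :
    W2sq (ν + α) (ν + β) ≤
      2 * ∫⁻ x, (‖x‖₊ : ℝ≥0∞) ^ 2 ∂α + 2 * ∫⁻ x, (‖x‖₊ : ℝ≥0∞) ^ 2 ∂β := by
  have hdiag : Measurable fun x : E => (x, x) := measurable_id.prodMk measurable_id
  set π := ν.map (fun x => (x, x)) + rescaledProd α β
  have hfst : π.map Prod.fst = ν + α := by
    rw [Measure.map_add _ _ measurable_fst, Measure.map_map measurable_fst hdiag,
      map_fst_rescaledProd h]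
    exact congrArg (· + α) Measure.map_id
  have hsnd : π.map Prod.snd = ν + β := by
    rw [Measure.map_add _ _ measurable_snd, Measure.map_map measurable_snd hdiag,
      map_snd_rescaledProd h]
    exact congrArg (· + β) Measure.map_id
  have : IsProbabilityMeasure π :=
    ⟨by rw [← measure_univ (μ := ν + α), ← hfst, Measure.map_apply measurable_fst .univ,
      preimage_univ]⟩
  have hdiag_cost : ∫⁻ p, (‖p.1 - p.2‖₊ : ℝ≥0∞) ^ 2 ∂ν.map (fun x => (x, x)) = 0 :=
    le_antisymm ((lintegral_map_le _ _).trans (by simp)) bot_le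
  calc W2sq (ν + α) (ν + β) ≤ ∫⁻ p, (‖p.1 - p.2‖₊ : ℝ≥0∞) ^ 2 ∂π :=
        W2sq_le_lintegral π hfst hsnd
    _ ≤ _ := by
      rw [lintegral_add_measure, hdiag_cost, zero_add]
      exact lintegral_rescaledProd_le h

end Coupling

theorem W2sq_le_of_isMixture {ι E : Type*} [MeasurableSpace ι] [NormedAddCommGroup E]
    [MeasurableSpace E] [OpensMeasurableSpace E] {ρ : Measure ι} {μ : ι → Measure E}
    (hμ : SetwiseAEMeasurable μ ρ) {a b : ι → ℝ≥0∞}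
    (ha : AEMeasurable a ρ) (hb : AEMeasurable b ρ) {P Q : Measure E}
    [IsProbabilityMeasure P] [IsProbabilityMeasure Q]
    (hP : IsMixture P ρ fun v => a v • μ v) (hQ : IsMixture Q ρ fun v => b v • μ v) {K : ℝ≥0∞}
    (hK : ∀ᵐ v ∂ρ, ∫⁻ x, (‖x‖₊ : ℝ≥0∞) ^ 2 ∂μ v ≤ K) :
    W2sq P Q ≤ 2 * K * ∫⁻ v, (a v - b v) + (b v - a v) ∂ρ := by
  obtain ⟨ν, hν⟩ := (hμ.smul (ha.min hb)).exists_isMixture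
  obtain ⟨α, hα⟩ := (hμ.smul (ha.fun_sub hb)).exists_isMixture
  obtain ⟨β, hβ⟩ := (hμ.smul (hb.fun_sub ha)).exists_isMixture
  have hPν : P = ν + α := hP.unique <| (hν.add hα (hμ.smul (ha.min hb))).congr_ae <|
    ae_of_all _ fun v => by rw [Pi.add_apply, ← add_smul, add_comm, tsub_add_min]
  have hQν : Q = ν + β := hQ.unique <| (hν.add hβ (hμ.smul (ha.min hb))).congr_ae <|
    ae_of_all _ fun v => by rw [Pi.add_apply, ← add_smul, add_comm, min_comm, tsub_add_min]
  have : IsProbabilityMeasure (ν + α) := hPν ▸ ‹_›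
  have : IsFiniteMeasure ν := isFiniteMeasure_of_le P (hPν ▸ Measure.le_add_right le_rfl)
  have : IsFiniteMeasure β := isFiniteMeasure_of_le Q (hQν ▸ Measure.le_add_left le_rfl)
  have hmass : α univ = β univ := by
    have h := (measure_univ (μ := P)).trans (measure_univ (μ := Q)).symm
    rw [hPν, hQν, Measure.add_apply, Measure.add_apply] at h
    exact (ENNReal.add_right_inj (measure_ne_top ν univ)).mp h
  have hsq : Measurable fun x : E => (‖x‖₊ : ℝ≥0∞) ^ 2 := by fun_prop
  calc W2sq P Q = W2sq (ν + α) (ν + β) := by rw [hPν, hQν]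
    _ ≤ 2 * ∫⁻ x, (‖x‖₊ : ℝ≥0∞) ^ 2 ∂α + 2 * ∫⁻ x, (‖x‖₊ : ℝ≥0∞) ^ 2 ∂β := W2sq_add_le ν hmass
    _ ≤ 2 * ((∫⁻ v, a v - b v ∂ρ) * K) + 2 * ((∫⁻ v, b v - a v ∂ρ) * K) := by
      gcongr
      exacts [hα.lintegral_le hμ (ha.fun_sub hb) hsq hK,
        hβ.lintegral_le hμ (hb.fun_sub ha) hsq hK]
    _ = 2 * K * ∫⁻ v, (a v - b v) + (b v - a v) ∂ρ := by
      rw [lintegral_add_left' (ha.fun_sub hb)]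
      ring

theorem ofReal_tsub_add_tsub_le_ofReal_abs_sub (x y : ℝ) :
    ENNReal.ofReal x - ENNReal.ofReal y + (ENNReal.ofReal y - ENNReal.ofReal x) ≤
      ENNReal.ofReal |x - y| := by
  have key {x y : ℝ} (h : x ≤ y) :
      ENNReal.ofReal y - ENNReal.ofReal x ≤ ENNReal.ofReal |x - y| := by
    rw [abs_sub_comm, abs_of_nonneg (sub_nonneg.2 h), tsub_le_iff_right]
    simpa using ENNReal.ofReal_add_le (p := y - x) (q := x)
  rcases le_total x y with h | h
  · rw [tsub_eq_zero_of_le (ENNReal.ofReal_le_ofReal h), zero_add]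
    exact key h
  · rw [tsub_eq_zero_of_le (ENNReal.ofReal_le_ofReal h), add_zero, abs_sub_comm]
    exact key h

theorem W2sq_mixture_weight_stability_general
    (d : ℕ) (w₁ w₂ : ℝ → ℝ) (K : ℝ)
    (hw₁_meas : AEMeasurable w₁ (volume.restrict (Set.Icc (0:ℝ) 1)))
    (hw₂_meas : AEMeasurable w₂ (volume.restrict (Set.Icc (0:ℝ) 1)))
    (μ : ℝ → Measure (EuclideanSpace ℝ (Fin d)))
    (hμsetwise : ∀ B : Set (EuclideanSpace ℝ (Fin d)), MeasurableSet B →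
      AEMeasurable (fun v => μ v B) (volume.restrict (Set.Icc (0:ℝ) 1)))
    (hμmom : ∀ v ∈ Set.Icc (0:ℝ) 1,
      ∫⁻ x, (‖x‖₊ : ℝ≥0∞) ^ 2 ∂(μ v) ≤ ENNReal.ofReal K)
    (P Q : Measure (EuclideanSpace ℝ (Fin d)))
    (hP_prob : IsProbabilityMeasure P)
    (hQ_prob : IsProbabilityMeasure Q)
    (hP : ∀ B : Set (EuclideanSpace ℝ (Fin d)), MeasurableSet B →
      P B = ∫⁻ v in Set.Icc (0:ℝ) 1, ENNReal.ofReal (w₁ v) * μ v B)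
    (hQ : ∀ B : Set (EuclideanSpace ℝ (Fin d)), MeasurableSet B →
      Q B = ∫⁻ v in Set.Icc (0:ℝ) 1, ENNReal.ofReal (w₂ v) * μ v B) :
    W2sq P Q ≤
      ENNReal.ofReal (2 * K) *
        ∫⁻ v in Set.Icc (0:ℝ) 1, ENNReal.ofReal |w₁ v - w₂ v| := by
  have hP' : IsMixture P _ fun v => ENNReal.ofReal (w₁ v) • μ v := fun s hs => by
    simpa only [Measure.smul_apply, smul_eq_mul] using hP s hs
  have hQ' : IsMixture Q _ fun v => ENNReal.ofReal (w₂ v) • μ v := fun s hs => by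
    simpa only [Measure.smul_apply, smul_eq_mul] using hQ s hs
  have hK : ∀ᵐ v ∂volume.restrict (Icc (0:ℝ) 1), _ :=
    (ae_restrict_mem measurableSet_Icc).mono hμmom
  refine (W2sq_le_of_isMixture hμsetwise hw₁_meas.ennreal_ofReal hw₂_meas.ennreal_ofReal
    hP' hQ' hK).trans ?_
  rw [ENNReal.ofReal_mul zero_le_two, ENNReal.ofReal_ofNat]
  gcongr with v
  exact ofReal_tsub_add_tsub_le_ofReal_abs_sub (w₁ v) (w₂ v)

/-- **Wasserstein stability of mixtures with respect to the weights**: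
`W₂²(P, Q) ≤ 2K ∫₀¹ |w₁(v) − w₂(v)| dv` when `P`, `Q` are mixtures of a common family of
measures with second moments bounded by `K`. -/
theorem W2sq_mixture_weight_stability
    (d : ℕ) (w₁ w₂ : ℝ → ℝ) (K : ℝ)
    (hw₁_meas : AEMeasurable w₁ (volume.restrict (Set.Icc (0:ℝ) 1)))
    (hw₂_meas : AEMeasurable w₂ (volume.restrict (Set.Icc (0:ℝ) 1)))
    (hw₁_nonneg : ∀ v ∈ Set.Icc (0:ℝ) 1, 0 ≤ w₁ v)
    (hw₂_nonneg : ∀ v ∈ Set.Icc (0:ℝ) 1, 0 ≤ w₂ v)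
    (hw₁_int : ∫ v in Set.Icc (0:ℝ) 1, w₁ v = 1)
    (hw₂_int : ∫ v in Set.Icc (0:ℝ) 1, w₂ v = 1)
    (μ : ℝ → Measure (EuclideanSpace ℝ (Fin d)))
    (hμprob : ∀ v ∈ Set.Icc (0:ℝ) 1, IsProbabilityMeasure (μ v))
    (hμsetwise : ∀ B : Set (EuclideanSpace ℝ (Fin d)), MeasurableSet B →
      AEMeasurable (fun v => μ v B) (volume.restrict (Set.Icc (0:ℝ) 1)))
    (hμmom : ∀ v ∈ Set.Icc (0:ℝ) 1,
      ∫⁻ x, (‖x‖₊ : ℝ≥0∞) ^ 2 ∂(μ v) ≤ ENNReal.ofReal K)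
    (P Q : Measure (EuclideanSpace ℝ (Fin d)))
    (hP_prob : IsProbabilityMeasure P)
    (hQ_prob : IsProbabilityMeasure Q)
    (hP : ∀ B : Set (EuclideanSpace ℝ (Fin d)), MeasurableSet B →
      P B = ∫⁻ v in Set.Icc (0:ℝ) 1, ENNReal.ofReal (w₁ v) * μ v B)
    (hQ : ∀ B : Set (EuclideanSpace ℝ (Fin d)), MeasurableSet B →
      Q B = ∫⁻ v in Set.Icc (0:ℝ) 1, ENNReal.ofReal (w₂ v) * μ v B) :
    W2sq P Q ≤
      ENNReal.ofReal (2 * K) *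
        ∫⁻ v in Set.Icc (0:ℝ) 1, ENNReal.ofReal |w₁ v - w₂ v| :=
  W2sq_mixture_weight_stability_general d w₁ w₂ K hw₁_meas hw₂_meas μ hμsetwise hμmom P Q hP_prob
    hQ_prob hP hQ

end
end

section
/- Let ε > 0 and let (μ^u)_{u∈[0,1]} be a family of Borel probability measures on ℝ^d such that the map u ↦ μ^u is measurable from [0,1] into the space of Borel probability measures on ℝ^d with the topology of weak convergence, and such that sup_{u∈[0,1]} ∫ |x|^{2+ε} dμ^u(x) < ∞. Then there exists a family (ξ^u)_{u∈[0,1]} of Borel measurable functions ξ^u : (0,1) → ℝ^d such that: (i) for every u ∈ [0,1], the pushforward of the Lebesgue measure on (0,1) under ξ^u equals μ^u; and (ii) the map u ↦ ξ^u, viewed as a map from [0,1] into the Banach space L²((0,1), Lebesgue; ℝ^d), is measurable. -/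
/-!
The Borel σ-algebra of the weak topology contains the Giry σ-algebra: for closed `F`, the
map `P ↦ P F` is a pointwise limit of the weakly continuous maps `P ↦ ∫⁻ gₙ ∂P`, `gₙ ↓ 𝟙_F`.
Hence `u ↦ μ u` is a Markov kernel, and a Markov kernel into a standard Borel space is the
image of Lebesgue measure under a jointly measurable map `(u, t) ↦ ξ u t` (Kallenberg,
Lemma 4.22). The moment bound puts every `ξ u` in `L²`; since `L²` is separable, `u ↦ ξ u`
is measurable into `L²` as soon as `u ↦ ‖ξ u - g‖₂` is for each `g ∈ L²`, which is Tonelli.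
-/

open MeasureTheory ENNReal Set Filter TopologicalSpace Metric Function ProbabilityTheory

lemma measurable_of_measurable_edist {β X : Type*} [MeasurableSpace β] [PseudoEMetricSpace X]
    [SeparableSpace X] {F : β → X} (hF : ∀ y, Measurable fun b => edist (F b) y) :
    Measurable[_, borel X] F := by
  let := borel X
  have : BorelSpace X := ⟨rfl⟩
  refine measurable_of_isClosed fun s hs => ?_
  obtain ⟨T, hTs, hT, hsT⟩ := (IsSeparable.of_separableSpace s).exists_countable_dense_subset
  have hdist : (fun b => infEDist (F b) s) = fun b => infEDist (F b) T := funext fun b =>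
    le_antisymm (infEDist_anti hTs) (infEDist_closure (s := T) ▸ infEDist_anti hsT)
  have hpre : F ⁻¹' s = (fun b => infEDist (F b) s) ⁻¹' {0} := by
    ext b
    simp only [mem_preimage, mem_singleton_iff, ← mem_closure_iff_infEDist_zero, hs.closure_eq]
  rw [hpre, hdist]
  exact Measurable.biInf T hT (fun y _ => hF y) (measurableSet_singleton 0)

namespace MeasureTheory

lemma ProbabilityMeasure.measurable_toMeasure_of_borel {Ω : Type*} [MeasurableSpace Ω]
    [TopologicalSpace Ω] [HasOuterApproxClosed Ω] [BorelSpace Ω] :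
    Measurable[borel (ProbabilityMeasure Ω), _]
      fun P : ProbabilityMeasure Ω => (P : Measure Ω) := by
  let := borel (ProbabilityMeasure Ω)
  have : BorelSpace (ProbabilityMeasure Ω) := ⟨rfl⟩
  refine Measurable.measure_of_isPiSystem_of_isProbabilityMeasure
    (BorelSpace.measurable_eq.trans borel_eq_generateFrom_isClosed) isPiSystem_isClosed
    fun F hF => ?_
  exact measurable_of_tendsto_metrizable' atTop
    (fun n => (continuous_lintegral_boundedContinuousFunction (hF.apprSeq n)).measurable)
    (tendsto_pi_nhds.mpr fun P => HasOuterApproxClosed.tendsto_lintegral_apprSeq hF P)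

lemma measurable_toLp_of_measurable_uncurry {β α E : Type*} [MeasurableSpace β]
    [MeasurableSpace α] [MeasurableSpace.CountablyGenerated α] {μ : Measure α} [SFinite μ]
    [NormedAddCommGroup E] [MeasurableSpace E] [BorelSpace E] [SecondCountableTopology E]
    {p : ℝ≥0∞} [Fact (1 ≤ p)] [Fact (p ≠ ∞)] {f : β → α → E} (hf : Measurable (uncurry f))
    (hmem : ∀ b, MemLp (f b) p μ) :
    Measurable[_, borel (Lp E p μ)] fun b => (hmem b).toLp (f b) := by
  have hp0 : p ≠ 0 := (one_pos.trans_le Fact.out).ne'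
  refine measurable_of_measurable_edist fun y => ?_
  have hy : Measurable y := (Lp.stronglyMeasurable y).measurable
  have hedist : (fun b => edist ((hmem b).toLp (f b)) y)
      = fun b => (∫⁻ t, ‖f b t - y t‖ₑ ^ p.toReal ∂μ) ^ (1 / p.toReal) := by
    ext b
    conv_lhs => rw [← Lp.toLp_coeFn y (Lp.memLp y), Lp.edist_toLp_toLp,
      eLpNorm_eq_lintegral_rpow_enorm_toReal hp0 Fact.out]
    rfl
  rw [hedist]
  exact (((hf.sub (hy.comp measurable_snd)).enorm.pow_const _).lintegral_prod_right').pow_const _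

lemma memLp_id_of_lintegral_rpow_lt_top {E : Type*} [NormedAddCommGroup E] [MeasurableSpace E]
    [BorelSpace E] [SecondCountableTopology E] {μ : Measure E} [IsFiniteMeasure μ]
    {p : ℝ≥0∞} {q : ℝ} (hq : 0 < q) (hpq : p ≤ ENNReal.ofReal q)
    (h : ∫⁻ x, ‖x‖ₑ ^ q ∂μ < ⊤) : MemLp id p μ := by
  have hq' : MemLp id (ENNReal.ofReal q) μ :=
    ⟨aestronglyMeasurable_id, (eLpNorm_lt_top_iff_lintegral_rpow_enorm_lt_top
      (ofReal_pos.mpr hq).ne' ofReal_ne_top).mpr (by simpa [toReal_ofReal hq.le] using h)⟩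
  exact hq'.mono_exponent hpq

end MeasureTheory

lemma map_projIcc_restrict_Ioo_eq_volume :
    (volume.restrict (Ioo (0:ℝ) 1)).map (projIcc (0:ℝ) 1 zero_le_one)
      = (volume : Measure unitInterval) := by
  rw [Measure.restrict_congr_set Ioo_ae_eq_Icc, ← unitInterval.measurePreserving_coe.map_eq,
    Measure.map_map continuous_projIcc.measurable measurable_subtype_coe]
  simp [comp_def, projIcc_val]

lemma ProbabilityTheory.Kernel.exists_measurable_map_restrict_Ioo_eq {X Y : Type*}
    [MeasurableSpace X] [MeasurableSpace Y] [StandardBorelSpace Y] [Nonempty Y]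
    (κ : Kernel X Y) [IsMarkovKernel κ] :
    ∃ f : X → ℝ → Y, Measurable (uncurry f) ∧
      ∀ a, (volume.restrict (Ioo (0:ℝ) 1)).map (f a) = κ a := by
  obtain ⟨g, hg, hgκ⟩ := κ.exists_measurable_map_eq_unitInterval
  have hproj : Measurable (projIcc (0:ℝ) 1 zero_le_one) := continuous_projIcc.measurable
  refine ⟨fun a => g a ∘ projIcc (0:ℝ) 1 zero_le_one,
    hg.comp (measurable_fst.prodMk (hproj.comp measurable_snd)), fun a => ?_⟩
  rw [← Measure.map_map hg.of_uncurry_left hproj, map_projIcc_restrict_Ioo_eq_volume, hgκ]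

/-- **Measurable selection of L² representatives.** Given a weakly-measurably indexed family
of probability measures on `ℝ^d` with uniformly bounded `(2+ε)`-moments, one can represent
each `μ^u` as the law of a Borel function `ξ^u : (0,1) → ℝ^d` under Lebesgue measure, in such a
way that `u ↦ ξ^u ∈ L²((0,1);ℝ^d)` is measurable. -/
theorem measurable_L2_representation
    (d : ℕ) (ε : ℝ) (hε : 0 < ε)
    (μ : ℝ → ProbabilityMeasure (EuclideanSpace ℝ (Fin d)))
    (hμmeas : Measurable[inferInstance,
        borel (ProbabilityMeasure (EuclideanSpace ℝ (Fin d)))]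
      (fun u : Set.Icc (0:ℝ) 1 => μ ↑u))
    (hmom : (⨆ u ∈ Set.Icc (0:ℝ) 1,
        ∫⁻ x, (‖x‖₊ : ℝ≥0∞) ^ ((2:ℝ) + ε)
          ∂(μ u : Measure (EuclideanSpace ℝ (Fin d)))) < ⊤) :
    ∃ (ξ : ℝ → ℝ → EuclideanSpace ℝ (Fin d))
      (_ : ∀ u, Measurable (ξ u))
      (hmem : ∀ u, MemLp (ξ u) 2 (volume.restrict (Set.Ioo (0:ℝ) 1))),
      (∀ u ∈ Set.Icc (0:ℝ) 1,
        Measure.map (ξ u) (volume.restrict (Set.Ioo (0:ℝ) 1)) =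
          (μ u : Measure (EuclideanSpace ℝ (Fin d)))) ∧
      Measurable[inferInstance,
          borel (Lp (EuclideanSpace ℝ (Fin d)) 2 (volume.restrict (Set.Ioo (0:ℝ) 1)))]
        (fun u : Set.Icc (0:ℝ) 1 => (hmem ↑u).toLp (ξ ↑u)) := by
  let κ : Kernel (Icc (0:ℝ) 1) (EuclideanSpace ℝ (Fin d)) :=
    ⟨fun u => μ u, ProbabilityMeasure.measurable_toMeasure_of_borel.comp hμmeas⟩
  have : IsMarkovKernel κ := ⟨fun u => (μ u).prop⟩
  obtain ⟨f, hf, hfκ⟩ := κ.exists_measurable_map_restrict_Ioo_eq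
  let ξ : ℝ → ℝ → EuclideanSpace ℝ (Fin d) :=
    fun u => if hu : u ∈ Icc 0 1 then f ⟨u, hu⟩ else 0
  have hξ : (fun u : Icc (0:ℝ) 1 => ξ u) = f := funext fun u => dif_pos u.2
  have hξmeas : ∀ u, Measurable (ξ u) := fun u => by
    by_cases hu : u ∈ Icc (0:ℝ) 1
    · simp only [ξ, dif_pos hu]
      exact hf.of_uncurry_left
    · simp only [ξ, dif_neg hu]
      exact measurable_const
  have hmap : ∀ u ∈ Icc (0:ℝ) 1, (volume.restrict (Ioo (0:ℝ) 1)).map (ξ u) = μ u :=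
    fun u hu => (congrFun hξ ⟨u, hu⟩).symm ▸ hfκ ⟨u, hu⟩
  have hmem : ∀ u, MemLp (ξ u) 2 (volume.restrict (Ioo (0:ℝ) 1)) := fun u => by
    by_cases hu : u ∈ Icc (0:ℝ) 1
    · have hmom_u := (le_biSup (fun u => ∫⁻ x, (‖x‖₊ : ℝ≥0∞) ^ ((2:ℝ) + ε)
          ∂(μ u : Measure (EuclideanSpace ℝ (Fin d)))) hu).trans_lt hmom
      exact (memLp_id_of_lintegral_rpow_lt_top (q := 2 + ε) (by linarith)
        (by rw [← ofReal_ofNat]; exact ofReal_le_ofReal (by linarith))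
        (by simpa only [enorm_eq_nnnorm] using hmom_u))
        |>.comp_measurePreserving ⟨hξmeas u, hmap u hu⟩
    · simp only [ξ, dif_neg hu]
      exact MemLp.zero
  have : Fact ((2:ℝ≥0∞) ≠ ∞) := ⟨ofNat_ne_top⟩
  exact ⟨ξ, hξmeas, hmem, hmap,
    measurable_toLp_of_measurable_uncurry (f := fun u : Icc (0:ℝ) 1 => ξ u) (hξ ▸ hf)
      (hmem ·)⟩
end

section
/- Let (X, 𝒜) be a measurable space, λ > 0, and let h : X × ℝ^k → ℝ be jointly measurable (with respect to 𝒜 ⊗ Borel(ℝ^k)) such that for each x ∈ X the map α ↦ h(x,α) is continuous and λ-strongly convex, i.e., h(x, tα + (1−t)α') ≤ t h(x,α) + (1−t) h(x,α') − λ t(1−t) |α−α'|² for all α, α' ∈ ℝ^k and t ∈ [0,1]. Then for each x ∈ X the function α ↦ h(x,α) attains its infimum at a unique point α̂(x) ∈ ℝ^k, and the map x ↦ α̂(x) is measurable from (X,𝒜) to ℝ^k with its Borel σ-algebra. -/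
/-! A continuous `λ`-strongly convex function on `ℝ^k` grows quadratically away from the origin,
so it has a minimizer `α̂`, unique by strict convexity; moreover `λ/2 · |α - α̂|² ≤ h α - h α̂`,
so every minimizing sequence converges to `α̂`. Measurability of `x ↦ α̂(x)` follows from this
well-posedness: along a dense sequence `(eᵢ)`, the minimum value `x ↦ infᵢ h(x, eᵢ)` is measurable,
and the first `eᵢ` whose value is within `1/(n+1)` of it is a measurable minimizing sequence
converging pointwise to `α̂`. -/

open Set Filter Topology

section StrongConvexity

variable {E : Type*} [NormedAddCommGroup E] [NormedSpace ℝ E] {f : E → ℝ} {m : ℝ}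

lemma strongConvexOn_univ_of_forall_le {lam : ℝ}
    (hf : ∀ (α α' : E) (t : ℝ), 0 ≤ t → t ≤ 1 →
      f (t • α + (1 - t) • α') ≤ t * f α + (1 - t) * f α' - lam * t * (1 - t) * ‖α - α'‖ ^ 2) :
    StrongConvexOn univ (2 * lam) f := by
  refine ⟨convex_univ, fun α _ α' _ a b ha _ hab => ?_⟩
  obtain rfl : b = 1 - a := by linarith
  calc f (a • α + (1 - a) • α')
      ≤ a * f α + (1 - a) * f α' - lam * a * (1 - a) * ‖α - α'‖ ^ 2 := hf α α' a ha (by linarith)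
    _ = _ := by simp only [smul_eq_mul]; ring

lemma StrongConvexOn.radial_lower_bound (hf : StrongConvexOn univ m f) {x : E} (hx : 1 ≤ ‖x‖) :
    f 0 + ‖x‖ * (f (‖x‖⁻¹ • x) - f 0 + m / 2 * (‖x‖ - 1)) ≤ f x := by
  set n := ‖x‖
  have hn : 0 < n := by linarith
  have hconv := hf.2 (mem_univ x) (mem_univ 0) (inv_nonneg.2 hn.le)
    (sub_nonneg.2 (inv_le_one_of_one_le₀ hx)) (add_sub_cancel _ _)
  simp only [smul_zero, add_zero, sub_zero, smul_eq_mul] at hconv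
  have hscaled : n * (n⁻¹ * f x + (1 - n⁻¹) * f 0 - n⁻¹ * (1 - n⁻¹) * (m / 2 * n ^ 2)) =
      f x + (n - 1) * f 0 - m / 2 * (n - 1) * n := by
    field_simp
  nlinarith [mul_le_mul_of_nonneg_left hconv hn.le]

lemma StrongConvexOn.exists_forall_le [ProperSpace E] (hf : StrongConvexOn univ m f) (hm : 0 < m)
    (hcont : Continuous f) : ∃ x, ∀ y, f x ≤ f y := by
  obtain ⟨c, hc⟩ := ((isCompact_sphere (0 : E) 1).image hcont).bddBelow
  refine hcont.exists_forall_le' 0 ?_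
  filter_upwards [tendsto_norm_cocompact_atTop.eventually
    (eventually_ge_atTop (max 1 (1 + 2 * (f 0 - c) / m)))] with x hx
  have hx1 : 1 ≤ ‖x‖ := (le_max_left _ _).trans hx
  have hx0 : ‖x‖ ≠ 0 := (zero_lt_one.trans_le hx1).ne'
  have hsphere : c ≤ f (‖x‖⁻¹ • x) := hc ⟨_, by simp [norm_smul, hx0], rfl⟩
  have hgrowth : f 0 - c ≤ m / 2 * (‖x‖ - 1) := by
    have : 2 * (f 0 - c) / m ≤ ‖x‖ - 1 := by linarith [(le_max_right _ _).trans hx]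
    rw [div_le_iff₀ hm] at this
    linarith
  nlinarith [hf.radial_lower_bound hx1]

lemma StrongConvexOn.sq_norm_sub_le_of_isMinOn {s : Set E} (hf : StrongConvexOn s m f) {x y : E}
    (hx : x ∈ s) (hy : y ∈ s) (hmin : IsMinOn f s x) : m / 4 * ‖y - x‖ ^ 2 ≤ f y - f x := by
  have hmid := hf.2 hy hx (by norm_num : (0 : ℝ) ≤ 1 / 2) (by norm_num : (0 : ℝ) ≤ 1 / 2)
    (by norm_num)
  have hle : f x ≤ f ((1 / 2 : ℝ) • y + (1 / 2 : ℝ) • x) :=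
    hmin (hf.1 hy hx (by norm_num) (by norm_num) (by norm_num))
  simp only [smul_eq_mul] at hmid
  nlinarith

lemma StrongConvexOn.tendsto_of_tendsto_apply (hf : StrongConvexOn univ m f) (hm : 0 < m) {x : E}
    (hmin : ∀ y, f x ≤ f y) {ι : Type*} {l : Filter ι} {u : ι → E}
    (hu : Tendsto (fun i => f (u i)) l (𝓝 (f x))) : Tendsto u l (𝓝 x) := by
  have hsq : Tendsto (fun i => ‖u i - x‖ ^ 2) l (𝓝 0) := by
    have hgap : Tendsto (fun i => 4 / m * (f (u i) - f x)) l (𝓝 0) := by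
      simpa using (hu.sub_const (f x)).const_mul (4 / m)
    refine squeeze_zero (fun _ => by positivity) (fun i => ?_) hgap
    have := hf.sq_norm_sub_le_of_isMinOn (mem_univ x) (mem_univ (u i)) (isMinOn_univ_iff.2 hmin)
    rw [div_mul_eq_mul_div, le_div_iff₀ hm]
    linarith
  rw [tendsto_iff_norm_sub_tendsto_zero]
  simpa [Real.sqrt_sq (norm_nonneg _)] using hsq.sqrt

end StrongConvexity

lemma DenseRange.ciInf_eq_of_forall_le {ι E α : Type*} [Nonempty ι] [TopologicalSpace E]
    [ConditionallyCompleteLinearOrder α] [TopologicalSpace α] [OrderClosedTopology α]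
    {e : ι → E} (he : DenseRange e) {f : E → α} (hf : Continuous f) {x : E}
    (hmin : ∀ y, f x ≤ f y) : ⨅ i, f (e i) = f x :=
  ciInf_eq_of_forall_ge_of_forall_gt_exists_lt (fun i => hmin (e i)) fun _ hw =>
    he.exists_mem_open (isOpen_lt hf continuous_const) ⟨x, hw⟩

theorem measurable_of_forall_minimizing_tendsto {X E : Type*} [MeasurableSpace X]
    [TopologicalSpace E] [TopologicalSpace.SeparableSpace E]
    [TopologicalSpace.PseudoMetrizableSpace E]
    [Nonempty E] [MeasurableSpace E] [BorelSpace E] {f : X → E → ℝ} {g : X → E}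
    (hmeas : ∀ y, Measurable fun x => f x y) (hcont : ∀ x, Continuous (f x))
    (hmin : ∀ x y, f x (g x) ≤ f x y)
    (hwp : ∀ x (u : ℕ → E), Tendsto (fun n => f x (u n)) atTop (𝓝 (f x (g x))) →
      Tendsto u atTop (𝓝 (g x))) :
    Measurable g := by
  classical
  obtain ⟨e, he⟩ := TopologicalSpace.exists_dense_seq E
  have hval : ∀ x, ⨅ i, f x (e i) = f x (g x) := fun x =>
    he.ciInf_eq_of_forall_le (hcont x) (hmin x)
  have hval_meas : Measurable fun x => f x (g x) := by
    simpa only [hval] using Measurable.iInf fun i => hmeas (e i)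
  have hnear : ∀ (n : ℕ) x, ∃ i, f x (e i) < f x (g x) + 1 / (n + 1) := fun n x =>
    exists_lt_of_ciInf_lt (by rw [hval]; exact lt_add_of_pos_right _ Nat.one_div_pos_of_nat)
  have hu_meas : ∀ n, Measurable fun x => e (Nat.find (hnear n x)) := fun n =>
    measurable_from_nat.comp <| measurable_find _ fun i =>
      measurableSet_lt (hmeas (e i)) (hval_meas.add_const _)
  have hu_lim : ∀ x, Tendsto (fun n => f x (e (Nat.find (hnear n x)))) atTop (𝓝 (f x (g x))) :=
    fun x => tendsto_of_tendsto_of_tendsto_of_le_of_le tendsto_const_nhds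
      (by simpa using tendsto_one_div_add_atTop_nhds_zero_nat.const_add (f x (g x)))
      (fun n => hmin x _) (fun n => (Nat.find_spec (hnear n x)).le)
  exact measurable_of_tendsto_metrizable hu_meas (tendsto_pi_nhds.2 fun x => hwp x _ (hu_lim x))

/-- **Measurable selection of the argmin of a strongly convex family.** If `h : X × ℝ^k → ℝ` is
jointly measurable and, for each `x`, `h(x,·)` is continuous and `λ`-strongly convex, then
`h(x,·)` has a unique minimizer `α̂(x)` and `x ↦ α̂(x)` is measurable. -/
theorem strongly_convex_argmin_measurable
    (k : ℕ) (X : Type*) [MeasurableSpace X] (lam : ℝ) (hlam : 0 < lam)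
    (h : X → EuclideanSpace ℝ (Fin k) → ℝ)
    (hmeas : Measurable (fun q : X × EuclideanSpace ℝ (Fin k) => h q.1 q.2))
    (hcont : ∀ x, Continuous (h x))
    (hconv : ∀ x (α α' : EuclideanSpace ℝ (Fin k)) (t : ℝ), 0 ≤ t → t ≤ 1 →
      h x (t • α + (1 - t) • α') ≤
        t * h x α + (1 - t) * h x α' - lam * t * (1 - t) * ‖α - α'‖ ^ 2) :
    ∃ αhat : X → EuclideanSpace ℝ (Fin k),
      Measurable αhat ∧
      ∀ x, (∀ α, h x (αhat x) ≤ h x α) ∧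
        (∀ β, (∀ α, h x β ≤ h x α) → β = αhat x) := by
  have hsc : ∀ x, StrongConvexOn univ (2 * lam) (h x) := fun x =>
    strongConvexOn_univ_of_forall_le (hconv x)
  have hm : 0 < 2 * lam := by positivity
  choose αhat hmin using fun x => (hsc x).exists_forall_le hm (hcont x)
  refine ⟨αhat, ?_, fun x => ⟨hmin x, fun β hβ => ?_⟩⟩
  · exact measurable_of_forall_minimizing_tendsto
      (fun α => hmeas.comp (measurable_id.prodMk measurable_const)) hcont hmin
      fun x _ hu => (hsc x).tendsto_of_tendsto_apply hm (hmin x) hu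
  · exact ((hsc x).strictConvexOn hm).eq_of_isMinOn (isMinOn_univ_iff.2 hβ)
      (isMinOn_univ_iff.2 (hmin x)) (mem_univ β) (mem_univ (αhat x))
end
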